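/- arXiv:2309.16350 — 2 statements merged into one kernel-verified Lean document; each statement's English description precedes it below -/
import Mathlib

section
/- Hölder continuity in the position variable: if u ∈ C^α with α ∈ (0, 1+ϑ], then there exists a constant c > 0, depending only on d, ϑ and α, such that |u(t,x,v) − u(t,x+h,v)| ≤ c · ‖u‖_{C^α} · |h|^{α/(ϑ+1)} for all (t,x,v) ∈ ℝ×ℝ^{2d} and all h ∈ ℝ^d. -/
noncomputable section
open scoped BigOperators ENNReal

/-- Points of the Galilean group `ℝ × ℝ^d × ℝ^d`, written `z = (t, x, v)`. -/
abbrev Pt (d : ℕ) := ℝ × EuclideanSpace ℝ (Fin d) × EuclideanSpace ℝ (Fin d)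

variable {d : ℕ}

/-- Flow of the drift field `Y = ⟨v, ∇ₓ⟩ + ∂ₜ`. -/
def flowY (τ : ℝ) (z : Pt d) : Pt d := (z.1 + τ, z.2.1 + τ • z.2.2, z.2.2)

/-- Flow of the field `Z_h = ⟨h, ∇_v⟩`. -/
def flowZ (h : EuclideanSpace ℝ (Fin d)) (τ : ℝ) (z : Pt d) : Pt d :=
  (z.1, z.2.1, z.2.2 + τ • h)

/-- Flow of the constant field `⟨h, ∇ₓ⟩`. -/
def flowX (h : EuclideanSpace ℝ (Fin d)) (τ : ℝ) (z : Pt d) : Pt d :=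
  (z.1, z.2.1 + τ • h, z.2.2)

/-- `u` has a Lie derivative at `z` along the flow `φ`. -/
def HasLieAt (φ : ℝ → Pt d → Pt d) (u : Pt d → ℝ) (z : Pt d) : Prop :=
  DifferentiableAt ℝ (fun τ => u (φ τ z)) 0

/-- Lie derivative along `Y` (junk value if it does not exist). -/
def lieY (u : Pt d → ℝ) (z : Pt d) : ℝ := deriv (fun τ => u (flowY τ z)) 0

/-- Partial derivative `∂_{v_i}` as a Lie derivative along `Z_i`. -/
def dv (i : Fin d) (u : Pt d → ℝ) (z : Pt d) : ℝ :=
  deriv (fun τ => u (flowZ (EuclideanSpace.single i 1) τ z)) 0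

/-- Partial derivative `∂_{x_i}`. -/
def dx (i : Fin d) (u : Pt d → ℝ) (z : Pt d) : ℝ :=
  deriv (fun τ => u (flowX (EuclideanSpace.single i 1) τ z)) 0

/-- The list of indices associated to a multi-index `β` (index `i` repeated `β i` times). -/
def idxList (β : Fin d → ℕ) : List (Fin d) := (List.ofFn fun i => List.replicate (β i) i).flatten

/-- Iterated application of first-order operators along a list of indices. -/
def derivList (D : Fin d → (Pt d → ℝ) → Pt d → ℝ) : List (Fin d) → (Pt d → ℝ) → Pt d → ℝ
  | [], u => u
  | i :: l, u => D i (derivList D l u)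

/-- `∂_v^β u`. -/
def dvPow (β : Fin d → ℕ) (u : Pt d → ℝ) : Pt d → ℝ := derivList dv (idxList β) u

/-- `∂_x^γ u`. -/
def dxPow (γ : Fin d → ℕ) (u : Pt d → ℝ) : Pt d → ℝ := derivList dx (idxList γ) u

/-- All the intermediate derivatives in an iterated derivative exist at every point. -/
def ExistsDList (φ : Fin d → ℝ → Pt d → Pt d) (D : Fin d → (Pt d → ℝ) → Pt d → ℝ) :
    List (Fin d) → (Pt d → ℝ) → Prop
  | [], _ => True
  | i :: l, u => ExistsDList φ D l u ∧ ∀ z, HasLieAt (φ i) (derivList D l u) z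

/-- `∂_v^β u` exists (at every point, at every stage). -/
def ExistsDvPow (β : Fin d → ℕ) (u : Pt d → ℝ) : Prop :=
  ExistsDList (fun i => flowZ (EuclideanSpace.single i 1)) dv (idxList β) u

/-- `∂_x^γ u` exists (at every point, at every stage). -/
def ExistsDxPow (γ : Fin d → ℕ) (u : Pt d → ℝ) : Prop :=
  ExistsDList (fun i => flowX (EuclideanSpace.single i 1)) dx (idxList γ) u

/-- The iterated Lie derivatives `Y^j u`, `j = 1, …, k`, exist at every point. -/
def ExistsLieYIter (u : Pt d → ℝ) : ℕ → Prop
  | 0 => True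
  | k + 1 => ExistsLieYIter u k ∧ ∀ z : Pt d, HasLieAt flowY (lieY^[k] u) z

/-- Hölder seminorm `‖u‖_{C^α_{Z_i}}`. -/
def semiZ (i : Fin d) (α : ℝ) (u : Pt d → ℝ) : ℝ≥0∞ :=
  ⨆ (z : Pt d) (τ : ℝ) (_ : τ ≠ 0),
    ENNReal.ofReal (|u (flowZ (EuclideanSpace.single i 1) τ z) - u z| / |τ| ^ α)

/-- Hölder seminorm `‖u‖_{C^α_Y}`. -/
def semiY (ϑ α : ℝ) (u : Pt d → ℝ) : ℝ≥0∞ :=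
  ⨆ (z : Pt d) (τ : ℝ) (_ : τ ≠ 0),
    ENNReal.ofReal (|u (flowY τ z) - u z| / |τ| ^ (α / ϑ))

open Classical in
/-- The intrinsic Hölder seminorm `‖u‖_{C^α}`, defined recursively (with fuel). -/
def hNormAux (ϑ : ℝ) : ℕ → ℝ → (Pt d → ℝ) → ℝ≥0∞
  | 0, α, u => semiY ϑ α u + ∑ i, semiZ i α u
  | n + 1, α, u =>
    if α ≤ min 1 ϑ then semiY ϑ α u + ∑ i, semiZ i α u
    else if α ≤ max 1 ϑ then
      if ϑ < 1 then hNormAux ϑ n (α - ϑ) (lieY u) + ∑ i, semiZ i α u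
      else semiY ϑ α u + ∑ i, hNormAux ϑ n (α - 1) (dv i u)
    else hNormAux ϑ n (α - ϑ) (lieY u) + ∑ i, hNormAux ϑ n (α - 1) (dv i u)

open Classical in
/-- Membership in the intrinsic Hölder space `C^α`, defined recursively (with fuel). -/
def memAux (ϑ : ℝ) : ℕ → ℝ → (Pt d → ℝ) → Prop
  | 0, α, u => hNormAux ϑ 0 α u ≠ ⊤
  | n + 1, α, u =>
    if α ≤ min 1 ϑ then hNormAux ϑ (n + 1) α u ≠ ⊤
    else if α ≤ max 1 ϑ then
      if ϑ < 1 then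
        (∀ z : Pt d, HasLieAt flowY u z) ∧ memAux ϑ n (α - ϑ) (lieY u) ∧
          hNormAux ϑ (n + 1) α u ≠ ⊤
      else
        (∀ (i : Fin d) (z : Pt d), HasLieAt (flowZ (EuclideanSpace.single i 1)) u z) ∧
          (∀ i : Fin d, memAux ϑ n (α - 1) (dv i u)) ∧ hNormAux ϑ (n + 1) α u ≠ ⊤
    else
      (∀ z : Pt d, HasLieAt flowY u z) ∧ memAux ϑ n (α - ϑ) (lieY u) ∧
        (∀ (i : Fin d) (z : Pt d), HasLieAt (flowZ (EuclideanSpace.single i 1)) u z) ∧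
          (∀ i : Fin d, memAux ϑ n (α - 1) (dv i u)) ∧ hNormAux ϑ (n + 1) α u ≠ ⊤

/-- Enough fuel for the recursion defining `C^α`. -/
def fuel (ϑ α : ℝ) : ℕ := Nat.ceil (α / min 1 ϑ) + 1

/-- The intrinsic Hölder seminorm `‖u‖_{C^α}` (value in `ℝ≥0∞`). -/
def holderNorm (ϑ α : ℝ) (u : Pt d → ℝ) : ℝ≥0∞ := hNormAux ϑ (fuel ϑ α) α u

/-- `u ∈ C^α`. -/
def IsHolder (ϑ α : ℝ) (u : Pt d → ℝ) : Prop := memAux ϑ (fuel ϑ α) α u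

/-!
The translation `x ↦ x - τη` is the commutator of the flows `e^{τY}` and `e^{Z_η}`; for
`τ = r^ϑ` and `|η| = r` it has size `r^{ϑ+1}`. Going around the commutator loop, the increment
of `u` splits into a difference of two `Y`-increments and a difference of two `v`-increments.
Each is bounded by `‖u‖_{C^α} r^α`: directly by the Hölder seminorms of order `α`, or, when
`C^α` is defined through `Yu` or `∂_{v_i} u`, by the mean value theorem along the flow and the
Hölder continuity in `x` of that derivative, which holds by induction along the recursion
defining `C^α`.
-/

section Flow

variable {X : Type*}

structure IsFlow (φ : ℝ → X → X) : Prop where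
  zero : ∀ x, φ 0 x = x
  add : ∀ a b x, φ a (φ b x) = φ (a + b) x

/-- `lieY`, `dv i`, `semiY ϑ α` and `semiZ i α` unfold to `lieDeriv` and `flowSemi` of the flows
`flowY` and `flowZ (EuclideanSpace.single i 1)` (with exponent `α / ϑ` for `semiY`). -/
def lieDeriv (φ : ℝ → X → X) (u : X → ℝ) (x : X) : ℝ := deriv (fun τ => u (φ τ x)) 0

def flowSemi (φ : ℝ → X → X) (γ : ℝ) (u : X → ℝ) : ℝ≥0∞ :=
  ⨆ (x : X) (τ : ℝ) (_ : τ ≠ 0), ENNReal.ofReal (|u (φ τ x) - u x| / |τ| ^ γ)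

variable {φ : ℝ → X → X} {u : X → ℝ}

lemma abs_sub_le_of_flowSemi_le (hφ : ∀ x, φ 0 x = x) {γ : ℝ} (hγ : 0 < γ) {N : ℝ≥0∞}
    (hN : flowSemi φ γ u ≤ N) (hN_ne_top : N ≠ ⊤) (x : X) (τ : ℝ) :
    |u (φ τ x) - u x| ≤ N.toReal * |τ| ^ γ := by
  rcases eq_or_ne τ 0 with rfl | hτ
  · simp [hφ, Real.zero_rpow hγ.ne']
  have hpos : 0 < |τ| ^ γ := Real.rpow_pos_of_pos (abs_pos.2 hτ) γ
  have hle : ENNReal.ofReal (|u (φ τ x) - u x| / |τ| ^ γ) ≤ N :=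
    le_trans (le_iSup₂_of_le x τ (by rw [iSup_pos hτ])) hN
  rw [← div_le_iff₀ hpos]
  exact (ENNReal.ofReal_le_iff_le_toReal hN_ne_top).1 hle

lemma IsFlow.hasDerivAt (hφ : IsFlow φ) (hu : ∀ x, DifferentiableAt ℝ (fun τ => u (φ τ x)) 0)
    (x : X) (s : ℝ) : HasDerivAt (fun τ => u (φ τ x)) (lieDeriv φ u (φ s x)) s := by
  unfold lieDeriv
  have h := HasDerivAt.comp_sub_const s s (by rw [sub_self]; exact (hu (φ s x)).hasDerivAt)
  simpa only [hφ.add, sub_add_cancel] using h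

lemma IsFlow.abs_sub_sub_le (hφ : IsFlow φ)
    (hu : ∀ x, DifferentiableAt ℝ (fun τ => u (φ τ x)) 0) {x y : X} {σ M : ℝ}
    (hM : ∀ s ∈ Set.uIcc 0 σ, |lieDeriv φ u (φ s x) - lieDeriv φ u (φ s y)| ≤ M) :
    |(u (φ σ x) - u x) - (u (φ σ y) - u y)| ≤ M * |σ| := by
  have h := Convex.norm_image_sub_le_of_norm_hasDerivWithin_le
    (f := fun s => u (φ s x) - u (φ s y))
    (fun s _ => ((hφ.hasDerivAt hu x s).sub (hφ.hasDerivAt hu y s)).hasDerivWithinAt) hM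
    (convex_uIcc 0 σ) Set.left_mem_uIcc Set.right_mem_uIcc
  simpa [hφ.zero, Real.norm_eq_abs, sub_sub_sub_comm] using h

end Flow

section Coordinates

lemma abs_sub_le_of_coordinate_steps (f : EuclideanSpace ℝ (Fin d) → ℝ)
    (η : EuclideanSpace ℝ (Fin d)) {M : ℝ}
    (hstep : ∀ (i : Fin d) (S : EuclideanSpace ℝ (Fin d)), ‖S‖ ≤ d * ‖η‖ →
      |f (S + η i • EuclideanSpace.single i 1) - f S| ≤ M) :
    |f η - f 0| ≤ d * M := by
  have partial_sums : ∀ s : Finset (Fin d),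
      ‖∑ i ∈ s, η i • EuclideanSpace.single i (1 : ℝ)‖ ≤ s.card * ‖η‖ ∧
        |f (∑ i ∈ s, η i • EuclideanSpace.single i 1) - f 0| ≤ s.card * M := by
    intro s
    induction s using Finset.induction_on with
    | empty => simp
    | insert a s has ih =>
      obtain ⟨hnorm, hdiff⟩ := ih
      have hS : ‖∑ i ∈ s, η i • EuclideanSpace.single i (1 : ℝ)‖ ≤ d * ‖η‖ :=
        hnorm.trans (mul_le_mul_of_nonneg_right (by simpa using Finset.card_le_univ s)
          (norm_nonneg η))
      rw [Finset.sum_insert has, Finset.card_insert_of_notMem has, add_comm, Nat.cast_succ]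
      constructor
      · refine (norm_add_le _ _).trans ?_
        rw [norm_smul, PiLp.norm_single, norm_one, mul_one]
        linarith [PiLp.norm_apply_le η a]
      · calc _ ≤ |f (_ + η a • EuclideanSpace.single a 1) - f _| + |f _ - f 0| :=
              abs_sub_le _ _ _
          _ ≤ M + s.card * M := add_le_add (hstep a _ hS) hdiff
          _ = _ := by ring
  have hη : ∑ i, η i • EuclideanSpace.single i (1 : ℝ) = η := by
    simpa using (EuclideanSpace.basisFun (Fin d) ℝ).sum_repr η
  simpa [hη] using (partial_sums Finset.univ).2

end Coordinates

section Kinetic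

def shiftX (ξ : EuclideanSpace ℝ (Fin d)) (z : Pt d) : Pt d := (z.1, z.2.1 + ξ, z.2.2)

def shiftV (η : EuclideanSpace ℝ (Fin d)) (z : Pt d) : Pt d := (z.1, z.2.1, z.2.2 + η)

lemma isFlow_flowY : IsFlow (flowY (d := d)) where
  zero z := by simp [flowY]
  add a b z := by
    simp only [flowY, Prod.mk.injEq, and_true]
    constructor
    · ring
    · module

lemma isFlow_flowZ (h : EuclideanSpace ℝ (Fin d)) : IsFlow (flowZ h) where
  zero z := by simp [flowZ]
  add a b z := by
    simp only [flowZ, Prod.mk.injEq, true_and]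
    module

lemma flowZ_shiftV (h S : EuclideanSpace ℝ (Fin d)) (σ : ℝ) (z : Pt d) :
    flowZ h σ (shiftV S z) = shiftV (S + σ • h) z := by
  simp only [flowZ, shiftV, add_assoc]

lemma flowY_shiftV_shiftX (τ : ℝ) (η : EuclideanSpace ℝ (Fin d)) (z : Pt d) :
    flowY τ (shiftV η (shiftX (-(τ • η)) z)) = shiftV η (flowY τ z) := by
  simp only [flowY, shiftV, shiftX, Prod.mk.injEq, true_and, and_true]
  module

lemma flowY_shiftV_shiftX_eq_shiftX (τ s : ℝ) (η : EuclideanSpace ℝ (Fin d)) (z : Pt d) :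
    flowY s (shiftV η (shiftX (-(τ • η)) z)) = shiftX ((s - τ) • η) (shiftV η (flowY s z)) := by
  simp only [flowY, shiftV, shiftX, Prod.mk.injEq, true_and, and_true]
  module

lemma shiftV_flowY_eq_shiftX (τ : ℝ) (η T : EuclideanSpace ℝ (Fin d)) (z : Pt d) :
    shiftV T (flowY τ z) = shiftX (τ • (η - T)) (flowY τ (shiftV T (shiftX (-(τ • η)) z))) := by
  simp only [flowY, shiftV, shiftX, Prod.mk.injEq, true_and, and_true]
  module

end Kinetic

section Seminorms

variable {u : Pt d → ℝ} {N : ℝ≥0∞}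

lemma abs_flowY_sub_le {ϑ α : ℝ} (hϑ : 0 < ϑ) (hα : 0 < α) (hN : semiY ϑ α u ≤ N)
    (hN_ne_top : N ≠ ⊤) (z : Pt d) {r : ℝ} (hr : 0 ≤ r) :
    |u (flowY (r ^ ϑ) z) - u z| ≤ N.toReal * r ^ α := by
  have h := abs_sub_le_of_flowSemi_le isFlow_flowY.zero (div_pos hα hϑ) hN hN_ne_top z (r ^ ϑ)
  rwa [abs_of_nonneg (Real.rpow_nonneg hr ϑ), ← Real.rpow_mul hr, mul_div_cancel₀ α hϑ.ne']
    at h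

lemma abs_shiftV_sub_le {α : ℝ} (hα : 0 < α) (hN : ∀ i, semiZ i α u ≤ N) (hN_ne_top : N ≠ ⊤)
    (z : Pt d) (η : EuclideanSpace ℝ (Fin d)) :
    |u (shiftV η z) - u z| ≤ d * (N.toReal * ‖η‖ ^ α) := by
  have h := abs_sub_le_of_coordinate_steps (fun S => u (shiftV S z)) η (M := N.toReal * ‖η‖ ^ α)
    fun i S _ => by
      rw [← flowZ_shiftV]
      refine (abs_sub_le_of_flowSemi_le (isFlow_flowZ _).zero hα (hN i) hN_ne_top _ _).trans ?_
      gcongr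
      exact PiLp.norm_apply_le η i
  simpa [shiftV] using h

end Seminorms

section HolderInX

def HolderInX (ϑ α C : ℝ) (u : Pt d → ℝ) : Prop :=
  ∀ (z : Pt d) (ξ : EuclideanSpace ℝ (Fin d)), |u z - u (shiftX ξ z)| ≤ C * ‖ξ‖ ^ (α / (ϑ + 1))

variable {ϑ α C : ℝ} {u : Pt d → ℝ}

lemma HolderInX.mono {C' : ℝ} (hu : HolderInX ϑ α C u) (hC : C ≤ C') : HolderInX ϑ α C' u :=
  fun z ξ => (hu z ξ).trans (by gcongr)

lemma HolderInX.abs_sub_le (hu : HolderInX ϑ α C u) (hC : 0 ≤ C) (hϑ : 0 < ϑ) (hα : 0 ≤ α)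
    (hαϑ : α ≤ ϑ + 1) {K r : ℝ} (hK : 1 ≤ K) (hr : 0 ≤ r) {ξ : EuclideanSpace ℝ (Fin d)}
    (hξ : ‖ξ‖ ≤ K * r ^ (ϑ + 1)) (z : Pt d) :
    |u z - u (shiftX ξ z)| ≤ C * K * r ^ α := by
  have hγ0 : 0 ≤ α / (ϑ + 1) := by positivity
  have hγ1 : α / (ϑ + 1) ≤ 1 := (div_le_one (by linarith)).2 hαϑ
  calc |u z - u (shiftX ξ z)| ≤ C * (K * r ^ (ϑ + 1)) ^ (α / (ϑ + 1)) := by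
        refine (hu z ξ).trans ?_
        gcongr
    _ = C * (K ^ (α / (ϑ + 1)) * r ^ α) := by
        rw [Real.mul_rpow (by linarith) (by positivity), ← Real.rpow_mul hr,
          mul_div_cancel₀ α (by linarith)]
    _ ≤ C * (K * r ^ α) := by
        gcongr
        exact Real.rpow_le_self_of_one_le hK hγ1
    _ = C * K * r ^ α := by ring

end HolderInX

section Commutator

variable {ϑ α : ℝ} {u : Pt d → ℝ}

/-- Along the loop `z → e^{τY} z → e^{Z_η} e^{τY} z → e^{-τY} e^{Z_η} e^{τY} z → shiftX (-τη) z`,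
the increment of `u` splits into a difference of two `Y`-increments (`commY`) and a difference
of two `v`-increments (`commZ`). -/
def commY (u : Pt d → ℝ) (τ : ℝ) (η : EuclideanSpace ℝ (Fin d)) (z : Pt d) : ℝ :=
  (u (flowY τ z) - u z) -
    (u (flowY τ (shiftV η (shiftX (-(τ • η)) z))) - u (shiftV η (shiftX (-(τ • η)) z)))

def commZ (u : Pt d → ℝ) (τ : ℝ) (η : EuclideanSpace ℝ (Fin d)) (z : Pt d) : ℝ :=
  (u (shiftV η (flowY τ z)) - u (flowY τ z)) -
    (u (shiftV η (shiftX (-(τ • η)) z)) - u (shiftX (-(τ • η)) z))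

lemma commY_add_commZ (u : Pt d → ℝ) (τ : ℝ) (η : EuclideanSpace ℝ (Fin d)) (z : Pt d) :
    commY u τ η z + commZ u τ η z = u (shiftX (-(τ • η)) z) - u z := by
  rw [commY, commZ, flowY_shiftV_shiftX]
  ring

/-- Taking `τ = r^ϑ` and `|η| = r` with `r = |ξ|^{1/(ϑ+1)}` realises any `x`-translation `ξ`. -/
lemma holderInX_of_comm_le (hϑ : 0 < ϑ) (hα : 0 < α) {A B : ℝ}
    (hY : ∀ (r : ℝ) (η : EuclideanSpace ℝ (Fin d)) (z : Pt d), 0 < r → ‖η‖ ≤ r →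
      |commY u (r ^ ϑ) η z| ≤ A * r ^ α)
    (hZ : ∀ (r : ℝ) (η : EuclideanSpace ℝ (Fin d)) (z : Pt d), 0 < r → ‖η‖ ≤ r →
      |commZ u (r ^ ϑ) η z| ≤ B * r ^ α) :
    HolderInX ϑ α (A + B) u := by
  intro z ξ
  rcases eq_or_ne ξ 0 with rfl | hξ
  · simp [shiftX, Real.zero_rpow (div_pos hα (by linarith : (0 : ℝ) < ϑ + 1)).ne']
  set r := ‖ξ‖ ^ (1 / (ϑ + 1)) with hr_def
  have hr : 0 < r := Real.rpow_pos_of_pos (norm_pos_iff.2 hξ) _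
  have hτ : 0 < r ^ ϑ := Real.rpow_pos_of_pos hr ϑ
  have hξr : ‖ξ‖ = r ^ ϑ * r := by
    rw [← Real.rpow_add_one hr.ne', hr_def, ← Real.rpow_mul (norm_nonneg ξ),
      one_div_mul_cancel (by linarith), Real.rpow_one]
  have hrα : r ^ α = ‖ξ‖ ^ (α / (ϑ + 1)) := by
    rw [hr_def, ← Real.rpow_mul (norm_nonneg ξ), one_div_mul_eq_div]
  set η := -((r ^ ϑ)⁻¹ • ξ)
  have hη : ‖η‖ = r := by
    rw [norm_neg, norm_smul, hξr, Real.norm_of_nonneg (inv_nonneg.2 hτ.le), inv_mul_cancel_left₀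
      hτ.ne']
  have hξη : -(r ^ ϑ • η) = ξ := by
    simp only [η, smul_neg, neg_neg, smul_inv_smul₀ hτ.ne']
  rw [← hrα, abs_sub_comm, ← hξη, ← commY_add_commZ, add_mul]
  exact (abs_add_le _ _).trans (add_le_add (hY r η z hr hη.le) (hZ r η z hr hη.le))

end Commutator

section CommutatorBounds

variable {ϑ α : ℝ} {N : ℝ≥0∞}

lemma abs_shiftX_shiftV_sub_le {g : Pt d → ℝ} (hϑ : 0 < ϑ) {β : ℝ} (hβ : 0 < β)
    (hβϑ : β ≤ ϑ + 1) (hN : ∀ i, semiZ i β g ≤ N) (hN_ne_top : N ≠ ⊤) {c : ℝ} (hc : 0 ≤ c)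
    (hx : HolderInX ϑ β (c * N.toReal) g) {K r : ℝ} (hK : 1 ≤ K) (hr : 0 ≤ r)
    {ξ η : EuclideanSpace ℝ (Fin d)} (hξ : ‖ξ‖ ≤ K * r ^ (ϑ + 1)) (hη : ‖η‖ ≤ r) (z : Pt d) :
    |g (shiftX ξ (shiftV η z)) - g z| ≤ (c * K + d) * N.toReal * r ^ β := by
  have hv := abs_shiftV_sub_le hβ hN hN_ne_top z η
  have hx' := hx.abs_sub_le (by positivity) hϑ hβ.le hβϑ hK hr hξ (shiftV η z)
  calc _ ≤ |g (shiftV η z) - g (shiftX ξ (shiftV η z))| + |g (shiftV η z) - g z| := by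
        rw [abs_sub_comm (g (shiftV η z))]
        exact abs_sub_le _ _ _
    _ ≤ c * N.toReal * K * r ^ β + d * (N.toReal * r ^ β) :=
        add_le_add hx' (hv.trans (by gcongr))
    _ = (c * K + d) * N.toReal * r ^ β := by ring

lemma abs_shiftX_flowY_sub_le {g : Pt d → ℝ} (hϑ : 0 < ϑ) {β : ℝ} (hβ : 0 < β)
    (hβϑ : β ≤ ϑ + 1) (hN : semiY ϑ β g ≤ N) (hN_ne_top : N ≠ ⊤) {c : ℝ} (hc : 0 ≤ c)
    (hx : HolderInX ϑ β (c * N.toReal) g) {K r : ℝ} (hK : 1 ≤ K) (hr : 0 ≤ r)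
    {ξ : EuclideanSpace ℝ (Fin d)} (hξ : ‖ξ‖ ≤ K * r ^ (ϑ + 1)) (z : Pt d) :
    |g (shiftX ξ (flowY (r ^ ϑ) z)) - g z| ≤ (c * K + 1) * N.toReal * r ^ β := by
  have hy := abs_flowY_sub_le hϑ hβ hN hN_ne_top z hr
  have hx' := hx.abs_sub_le (by positivity) hϑ hβ.le hβϑ hK hr hξ (flowY (r ^ ϑ) z)
  calc _ ≤ |g (flowY (r ^ ϑ) z) - g (shiftX ξ (flowY (r ^ ϑ) z))| +
        |g (flowY (r ^ ϑ) z) - g z| := by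
        rw [abs_sub_comm (g (flowY (r ^ ϑ) z))]
        exact abs_sub_le _ _ _
    _ ≤ c * N.toReal * K * r ^ β + N.toReal * r ^ β := add_le_add hx' hy
    _ = (c * K + 1) * N.toReal * r ^ β := by ring

variable {u : Pt d → ℝ}

lemma abs_commY_le_of_semiY_le (hϑ : 0 < ϑ) (hα : 0 < α) (hN : semiY ϑ α u ≤ N)
    (hN_ne_top : N ≠ ⊤) {r : ℝ} (hr : 0 ≤ r) (η : EuclideanSpace ℝ (Fin d)) (z : Pt d) :
    |commY u (r ^ ϑ) η z| ≤ 2 * N.toReal * r ^ α := by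
  have h₁ := abs_flowY_sub_le hϑ hα hN hN_ne_top z hr
  have h₂ := abs_flowY_sub_le hϑ hα hN hN_ne_top (shiftV η (shiftX (-(r ^ ϑ • η)) z)) hr
  calc |commY u (r ^ ϑ) η z| ≤ N.toReal * r ^ α + N.toReal * r ^ α :=
        (abs_sub _ _).trans (add_le_add h₁ h₂)
    _ = 2 * N.toReal * r ^ α := by ring

/-- Mean value theorem along `Y`: on the two `Y`-orbits the points differ by `η` in `v` and by
at most `r^{ϑ+1}` in `x`. -/
lemma abs_commY_le_of_lieY (hϑ : 0 < ϑ) (hϑα : ϑ < α) (hαϑ : α ≤ ϑ + 1)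
    (hu : ∀ z, HasLieAt flowY u z) (hN : ∀ i, semiZ i (α - ϑ) (lieY u) ≤ N)
    (hN_ne_top : N ≠ ⊤) {c : ℝ} (hc : 0 ≤ c) (hx : HolderInX ϑ (α - ϑ) (c * N.toReal) (lieY u))
    {r : ℝ} (hr : 0 < r) {η : EuclideanSpace ℝ (Fin d)} (hη : ‖η‖ ≤ r) (z : Pt d) :
    |commY u (r ^ ϑ) η z| ≤ (c + d) * N.toReal * r ^ α := by
  set τ := r ^ ϑ
  have hτ : 0 < τ := Real.rpow_pos_of_pos hr ϑ
  have hM : ∀ s ∈ Set.uIcc 0 τ, |lieY u (flowY s z) -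
      lieY u (flowY s (shiftV η (shiftX (-(τ • η)) z)))| ≤ (c + d) * N.toReal * r ^ (α - ϑ) := by
    intro s hs
    rw [Set.uIcc_of_le hτ.le] at hs
    have hξ : ‖(s - τ) • η‖ ≤ 1 * r ^ (ϑ + 1) := by
      rw [norm_smul, Real.norm_eq_abs, abs_of_nonpos (by linarith [hs.2]), one_mul,
        Real.rpow_add_one hr.ne']
      exact mul_le_mul (by linarith [hs.1]) hη (norm_nonneg η) hτ.le
    rw [flowY_shiftV_shiftX_eq_shiftX, abs_sub_comm, ← mul_one c]
    exact abs_shiftX_shiftV_sub_le hϑ (by linarith) (by linarith) hN hN_ne_top hc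
      hx le_rfl hr.le hξ hη (flowY s z)
  calc |commY u τ η z| ≤ (c + d) * N.toReal * r ^ (α - ϑ) * |τ| :=
        isFlow_flowY.abs_sub_sub_le hu hM
    _ = (c + d) * N.toReal * r ^ α := by
        rw [abs_of_pos hτ, mul_assoc, ← Real.rpow_add hr, sub_add_cancel]

variable {i : Fin d}

lemma abs_commZ_le_of_semiZ_le (hα : 0 < α) (hN : ∀ i, semiZ i α u ≤ N) (hN_ne_top : N ≠ ⊤)
    {r : ℝ} {η : EuclideanSpace ℝ (Fin d)} (hη : ‖η‖ ≤ r) (τ : ℝ) (z : Pt d) :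
    |commZ u τ η z| ≤ 2 * d * N.toReal * r ^ α := by
  have h₁ := abs_shiftV_sub_le hα hN hN_ne_top (flowY τ z) η
  have h₂ := abs_shiftV_sub_le hα hN hN_ne_top (shiftX (-(τ • η)) z) η
  calc |commZ u τ η z| ≤ d * (N.toReal * ‖η‖ ^ α) + d * (N.toReal * ‖η‖ ^ α) :=
        (abs_sub _ _).trans (add_le_add h₁ h₂)
    _ ≤ d * (N.toReal * r ^ α) + d * (N.toReal * r ^ α) := by gcongr
    _ = 2 * d * N.toReal * r ^ α := by ring

/-- Mean value theorem along `Z_i`: on the two `Z_i`-orbits the points differ by a `Y`-step of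
length `r^ϑ` and an `x`-translation of size at most `(d+2) r^{ϑ+1}`. -/
lemma abs_shiftV_single_sub_sub_le (hϑ : 0 < ϑ) (h1α : 1 < α) (hαϑ : α ≤ ϑ + 1)
    (hu : ∀ z, HasLieAt (flowZ (EuclideanSpace.single i 1)) u z)
    (hN : semiY ϑ (α - 1) (dv i u) ≤ N) (hN_ne_top : N ≠ ⊤) {c : ℝ} (hc : 0 ≤ c)
    (hx : HolderInX ϑ (α - 1) (c * N.toReal) (dv i u))
    {r : ℝ} (hr : 0 < r) {η S : EuclideanSpace ℝ (Fin d)} (hη : ‖η‖ ≤ r) (hS : ‖S‖ ≤ d * r)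
    (z : Pt d) :
    |(u (shiftV (S + η i • EuclideanSpace.single i 1) (flowY (r ^ ϑ) z)) -
        u (shiftV S (flowY (r ^ ϑ) z))) -
      (u (shiftV (S + η i • EuclideanSpace.single i 1) (shiftX (-(r ^ ϑ • η)) z)) -
        u (shiftV S (shiftX (-(r ^ ϑ • η)) z)))| ≤ (c * (d + 2) + 1) * N.toReal * r ^ α := by
  set τ := r ^ ϑ
  have hτ : 0 < τ := Real.rpow_pos_of_pos hr ϑ
  have hηi : |η i| ≤ r := (PiLp.norm_apply_le η i).trans hη
  set M := (c * (d + 2) + 1) * N.toReal * r ^ (α - 1)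
  have hσ : ∀ s ∈ Set.uIcc 0 (η i),
      |dv i u (flowZ (EuclideanSpace.single i 1) s (shiftV S (flowY τ z))) -
        dv i u (flowZ (EuclideanSpace.single i 1) s (shiftV S (shiftX (-(τ • η)) z)))| ≤ M := by
    intro s hs
    have hs' : |s| ≤ r := by
      have h := Set.abs_sub_left_of_mem_uIcc hs
      rw [sub_zero, sub_zero] at h
      exact h.trans hηi
    have hT : ‖η - (S + s • EuclideanSpace.single i 1)‖ ≤ (d + 2) * r := by
      calc _ ≤ ‖η‖ + (‖S‖ + |s|) := by
            refine (norm_sub_le _ _).trans (add_le_add le_rfl ((norm_add_le _ _).trans ?_))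
            simp [norm_smul]
        _ ≤ r + (d * r + r) := by gcongr
        _ = (d + 2) * r := by ring
    have hζ : ‖τ • (η - (S + s • EuclideanSpace.single i 1))‖ ≤ (d + 2) * r ^ (ϑ + 1) := by
      rw [norm_smul, Real.norm_of_nonneg hτ.le, Real.rpow_add_one hr.ne']
      nlinarith
    rw [flowZ_shiftV, flowZ_shiftV, shiftV_flowY_eq_shiftX τ η]
    exact abs_shiftX_flowY_sub_le hϑ (by linarith) (by linarith) hN hN_ne_top hc hx
      (by linarith) hr.le hζ _
  have h := (isFlow_flowZ _).abs_sub_sub_le hu hσ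
  rw [flowZ_shiftV, flowZ_shiftV] at h
  calc _ ≤ M * |η i| := h
    _ ≤ M * r := by gcongr
    _ = _ := by rw [mul_assoc, ← Real.rpow_add_one hr.ne', sub_add_cancel]

lemma abs_commZ_le_of_dv (hϑ : 0 < ϑ) (h1α : 1 < α) (hαϑ : α ≤ ϑ + 1)
    (hu : ∀ i z, HasLieAt (flowZ (EuclideanSpace.single i 1)) u z)
    (hN : ∀ i, semiY ϑ (α - 1) (dv i u) ≤ N) (hN_ne_top : N ≠ ⊤) {c : ℝ} (hc : 0 ≤ c)
    (hx : ∀ i, HolderInX ϑ (α - 1) (c * N.toReal) (dv i u))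
    {r : ℝ} (hr : 0 < r) {η : EuclideanSpace ℝ (Fin d)} (hη : ‖η‖ ≤ r) (z : Pt d) :
    |commZ u (r ^ ϑ) η z| ≤ d * (c * (d + 2) + 1) * N.toReal * r ^ α := by
  have h := abs_sub_le_of_coordinate_steps (fun S => u (shiftV S (flowY (r ^ ϑ) z)) -
      u (flowY (r ^ ϑ) z) - (u (shiftV S (shiftX (-(r ^ ϑ • η)) z)) - u (shiftX (-(r ^ ϑ • η)) z)))
    η fun i S hS => by
      convert abs_shiftV_single_sub_sub_le hϑ h1α hαϑ (hu i) (hN i) hN_ne_top hc (hx i) hr hη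
        (hS.trans (by gcongr)) z using 2
      ring
  simpa [shiftV, commZ, mul_assoc] using h

end CommutatorBounds

section Recursion

variable {ϑ α : ℝ}

lemma le_add_sum_univ {ι : Type*} [Fintype ι] (A : ℝ≥0∞) (f : ι → ℝ≥0∞) (i : ι) :
    f i ≤ A + ∑ j, f j :=
  le_add_left (Finset.single_le_sum_of_canonicallyOrdered (Finset.mem_univ i))

lemma semiY_le_hNormAux (hαϑ : α ≤ ϑ) (n : ℕ) (u : Pt d → ℝ) :
    semiY ϑ α u ≤ hNormAux ϑ n α u := by
  cases n with
  | zero => exact le_self_add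
  | succ n =>
    rw [hNormAux]
    split_ifs with hA hB hϑ1
    · exact le_self_add
    · exact absurd (by rwa [min_eq_right hϑ1.le]) hA
    · exact le_self_add
    · exact absurd (hαϑ.trans (le_max_right 1 ϑ)) hB

lemma semiZ_le_hNormAux (hα1 : α ≤ 1) (n : ℕ) (u : Pt d → ℝ) (i : Fin d) :
    semiZ i α u ≤ hNormAux ϑ n α u := by
  cases n with
  | zero => exact le_add_sum_univ _ _ i
  | succ n =>
    rw [hNormAux]
    split_ifs with hA hB hϑ1
    · exact le_add_sum_univ _ _ i
    · exact le_add_sum_univ _ _ i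
    · exact absurd (by rwa [min_eq_left (not_lt.1 hϑ1)]) hA
    · exact absurd (hα1.trans (le_max_left 1 ϑ)) hB

def UniformHolderInX (ϑ : ℝ) (n : ℕ) (α : ℝ) : Prop :=
  ∃ c, 0 < c ∧ ∀ u : Pt d → ℝ, memAux ϑ n α u → HolderInX ϑ α (c * (hNormAux ϑ n α u).toReal) u

lemma holderInX_of_semi_le (hϑ : 0 < ϑ) (hα : 0 < α) {u : Pt d → ℝ} {N : ℝ≥0∞}
    (hY : semiY ϑ α u ≤ N) (hZ : ∀ i, semiZ i α u ≤ N) (hN_ne_top : N ≠ ⊤) :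
    HolderInX ϑ α ((2 + 2 * d) * N.toReal) u :=
  (holderInX_of_comm_le hϑ hα
    (fun _ η z hr _ => abs_commY_le_of_semiY_le hϑ hα hY hN_ne_top hr.le η z)
    (fun _ _ z _ hη => abs_commZ_le_of_semiZ_le hα hZ hN_ne_top hη _ z)).mono
    (le_of_eq (by ring))

lemma uniformHolderInX_of_hNormAux_eq (hϑ : 0 < ϑ) (hα : 0 < α) {n : ℕ}
    (hnorm : ∀ u : Pt d → ℝ, hNormAux ϑ n α u = semiY ϑ α u + ∑ i, semiZ i α u)
    (hmem : ∀ u : Pt d → ℝ, memAux ϑ n α u → hNormAux ϑ n α u ≠ ⊤) :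
    UniformHolderInX (d := d) ϑ n α := by
  refine ⟨2 + 2 * d, by positivity, fun u hu => holderInX_of_semi_le hϑ hα ?_ ?_ (hmem u hu)⟩
  · exact hnorm u ▸ le_self_add
  · exact fun i => hnorm u ▸ le_add_sum_univ _ _ i

end Recursion

section Induction

variable {ϑ α : ℝ} {n : ℕ}

lemma uniformHolderInX_succ_of_lt_one (hϑ : 0 < ϑ) (hϑ1 : ϑ < 1) (hA : ¬α ≤ min 1 ϑ)
    (hB : α ≤ max 1 ϑ) (ih : UniformHolderInX (d := d) ϑ n (α - ϑ)) :
    UniformHolderInX (d := d) ϑ (n + 1) α := by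
  have hϑα : ϑ < α := by rw [min_eq_right hϑ1.le] at hA; exact not_le.1 hA
  have hα1 : α ≤ 1 := by rwa [max_eq_left hϑ1.le] at hB
  obtain ⟨c, hc, hψ⟩ := ih
  refine ⟨c + d + 2 * d, by positivity, fun u hu => ?_⟩
  have hnorm : hNormAux ϑ (n + 1) α u = hNormAux ϑ n (α - ϑ) (lieY u) + ∑ i, semiZ i α u := by
    rw [hNormAux, if_neg hA, if_pos hB, if_pos hϑ1]
  rw [memAux, if_neg hA, if_pos hB, if_pos hϑ1] at hu
  obtain ⟨hlie, hmem, hfin⟩ := hu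
  have hψN : hNormAux ϑ n (α - ϑ) (lieY u) ≤ hNormAux ϑ (n + 1) α u := hnorm ▸ le_self_add
  refine (holderInX_of_comm_le hϑ (by linarith)
    (fun _ _ z hr hη => abs_commY_le_of_lieY hϑ hϑα (by linarith) hlie
      (fun i => (semiZ_le_hNormAux (by linarith) n _ i).trans hψN) hfin hc.le
      ((hψ _ hmem).mono (by gcongr)) hr hη z)
    (fun _ _ z _ hη => abs_commZ_le_of_semiZ_le (by linarith)
      (fun i => hnorm ▸ le_add_sum_univ _ _ i) hfin hη _ z)).mono (le_of_eq (by ring))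

lemma uniformHolderInX_succ_of_one_le (hϑ : 0 < ϑ) (hϑ1 : ¬ϑ < 1) (hA : ¬α ≤ min 1 ϑ)
    (hB : α ≤ max 1 ϑ) (ih : UniformHolderInX (d := d) ϑ n (α - 1)) :
    UniformHolderInX (d := d) ϑ (n + 1) α := by
  have h1α : 1 < α := by rw [min_eq_left (not_lt.1 hϑ1)] at hA; exact not_le.1 hA
  have hαϑ : α ≤ ϑ := by rwa [max_eq_right (not_lt.1 hϑ1)] at hB
  obtain ⟨c, hc, hφ⟩ := ih
  refine ⟨2 + d * (c * (d + 2) + 1), by positivity, fun u hu => ?_⟩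
  have hnorm : hNormAux ϑ (n + 1) α u = semiY ϑ α u + ∑ i, hNormAux ϑ n (α - 1) (dv i u) := by
    rw [hNormAux, if_neg hA, if_pos hB, if_neg hϑ1]
  rw [memAux, if_neg hA, if_pos hB, if_neg hϑ1] at hu
  obtain ⟨hlie, hmem, hfin⟩ := hu
  have hφN : ∀ i, hNormAux ϑ n (α - 1) (dv i u) ≤ hNormAux ϑ (n + 1) α u :=
    fun i => hnorm ▸ le_add_sum_univ _ _ i
  refine (holderInX_of_comm_le hϑ (by linarith)
    (fun _ η z hr _ => abs_commY_le_of_semiY_le hϑ (by linarith) (hnorm ▸ le_self_add) hfin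
      hr.le η z)
    (fun _ _ z hr hη => abs_commZ_le_of_dv hϑ h1α (by linarith) hlie
      (fun i => (semiY_le_hNormAux (by linarith) n _).trans (hφN i)) hfin hc.le
      (fun i => (hφ _ (hmem i)).mono (by gcongr; exact hφN i)) hr hη z)).mono
    (le_of_eq (by ring))

lemma uniformHolderInX_succ_of_max_lt (hϑ : 0 < ϑ) (hαϑ : α ≤ ϑ + 1) (hB : ¬α ≤ max 1 ϑ)
    (ihY : UniformHolderInX (d := d) ϑ n (α - ϑ)) (ihZ : UniformHolderInX (d := d) ϑ n (α - 1)) :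
    UniformHolderInX (d := d) ϑ (n + 1) α := by
  have hA : ¬α ≤ min 1 ϑ := fun h => hB (h.trans min_le_max)
  have h1α : 1 < α := (le_max_left 1 ϑ).trans_lt (not_le.1 hB)
  have hϑα : ϑ < α := (le_max_right 1 ϑ).trans_lt (not_le.1 hB)
  obtain ⟨cψ, hcψ, hψ⟩ := ihY
  obtain ⟨cφ, hcφ, hφ⟩ := ihZ
  refine ⟨cψ + d + d * (cφ * (d + 2) + 1), by positivity, fun u hu => ?_⟩
  have hnorm : hNormAux ϑ (n + 1) α u =
      hNormAux ϑ n (α - ϑ) (lieY u) + ∑ i, hNormAux ϑ n (α - 1) (dv i u) := by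
    rw [hNormAux, if_neg hA, if_neg hB]
  rw [memAux, if_neg hA, if_neg hB] at hu
  obtain ⟨hlieY, hmemY, hlieZ, hmemZ, hfin⟩ := hu
  have hψN : hNormAux ϑ n (α - ϑ) (lieY u) ≤ hNormAux ϑ (n + 1) α u := hnorm ▸ le_self_add
  have hφN : ∀ i, hNormAux ϑ n (α - 1) (dv i u) ≤ hNormAux ϑ (n + 1) α u :=
    fun i => hnorm ▸ le_add_sum_univ _ _ i
  refine (holderInX_of_comm_le hϑ (by linarith)
    (fun _ _ z hr hη => abs_commY_le_of_lieY hϑ hϑα hαϑ hlieY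
      (fun i => (semiZ_le_hNormAux (by linarith) n _ i).trans hψN) hfin hcψ.le
      ((hψ _ hmemY).mono (by gcongr)) hr hη z)
    (fun _ _ z hr hη => abs_commZ_le_of_dv hϑ h1α hαϑ hlieZ
      (fun i => (semiY_le_hNormAux (by linarith) n _).trans (hφN i)) hfin hcφ.le
      (fun i => (hφ _ (hmemZ i)).mono (by gcongr; exact hφN i)) hr hη z)).mono
    (le_of_eq (by ring))

lemma uniformHolderInX (hϑ : 0 < ϑ) (n : ℕ) :
    ∀ α, 0 < α → α ≤ ϑ + 1 → UniformHolderInX (d := d) ϑ n α := by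
  induction n with
  | zero =>
    exact fun α hα _ => uniformHolderInX_of_hNormAux_eq hϑ hα (fun u => by rw [hNormAux])
      (fun u hu => by rwa [memAux] at hu)
  | succ n ih =>
    intro α hα hαϑ
    by_cases hA : α ≤ min 1 ϑ
    · exact uniformHolderInX_of_hNormAux_eq hϑ hα (fun u => by rw [hNormAux, if_pos hA])
        (fun u hu => by rwa [memAux, if_pos hA] at hu)
    by_cases hB : α ≤ max 1 ϑ
    · by_cases hϑ1 : ϑ < 1
      · have hϑα : ϑ < α := by rw [min_eq_right hϑ1.le] at hA; exact not_le.1 hA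
        exact uniformHolderInX_succ_of_lt_one hϑ hϑ1 hA hB (ih _ (by linarith) (by linarith))
      · have h1α : 1 < α := by rw [min_eq_left (not_lt.1 hϑ1)] at hA; exact not_le.1 hA
        exact uniformHolderInX_succ_of_one_le hϑ hϑ1 hA hB (ih _ (by linarith) (by linarith))
    · have h1α : 1 < α := (le_max_left 1 ϑ).trans_lt (not_le.1 hB)
      have hϑα : ϑ < α := (le_max_right 1 ϑ).trans_lt (not_le.1 hB)
      exact uniformHolderInX_succ_of_max_lt hϑ hαϑ hB (ih _ (by linarith) (by linarith))
        (ih _ (by linarith) (by linarith))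

end Induction

theorem holder_in_position_variable_general (d : ℕ) (ϑ : ℝ) (hϑ : 0 < ϑ)
    (α : ℝ) (hα0 : 0 < α) (hα1 : α ≤ 1 + ϑ) :
    ∃ c : ℝ, 0 < c ∧ ∀ u : Pt d → ℝ, IsHolder ϑ α u →
      ∀ (z : Pt d) (h : EuclideanSpace ℝ (Fin d)),
        |u z - u (z.1, z.2.1 + h, z.2.2)| ≤
          c * (holderNorm ϑ α u).toReal * ‖h‖ ^ (α / (ϑ + 1)) :=
  uniformHolderInX hϑ (fuel ϑ α) α hα0 (by linarith)

/-- Hölder continuity in the position variable: if `u ∈ C^α` with `α ∈ (0, 1+ϑ]`, then there is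
`c > 0`, depending only on `d`, `ϑ` and `α`, such that
`|u(t,x,v) − u(t,x+h,v)| ≤ c ‖u‖_{C^α} |h|^{α/(ϑ+1)}` for all `(t,x,v)` and `h ∈ ℝ^d`. -/
theorem holder_in_position_variable (d : ℕ) (hd : 1 ≤ d) (ϑ : ℝ) (hϑ : 0 < ϑ)
    (α : ℝ) (hα0 : 0 < α) (hα1 : α ≤ 1 + ϑ) :
    ∃ c : ℝ, 0 < c ∧ ∀ u : Pt d → ℝ, IsHolder ϑ α u →
      ∀ (z : Pt d) (h : EuclideanSpace ℝ (Fin d)),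
        |u z - u (z.1, z.2.1 + h, z.2.2)| ≤
          c * (holderNorm ϑ α u).toReal * ‖h‖ ^ (α / (ϑ + 1)) :=
  holder_in_position_variable_general d ϑ hϑ α hα0 hα1

end
end

section
/- Non-homogeneous flow composition identity: let B be a real (2d×2d) matrix with block decomposition B = [[B₁₁,B₁₂],[B₂₁,B₂₂]], let ϑ>0, τ ≥ 0, w∈ℝ^d and z=(t,x,v)∈ℝ×ℝ^{2d}. Define z₂ = e^{τZ_w}(z), z₃ = e^{τ^ϑ Y}(z₂), z₄ = e^{−τZ_w}(z₃), z₅ = e^{−τ^ϑ Y}(z₄) and z₆ = e^{−τ^{ϑ+1} Z_{B₂₂w}}(z₅). Then z₆ = (t, (x,v)ᵀ + τ^{ϑ+1}(B₁₂w, 0)ᵀ) − τ^{2ϑ+1}·(0, Σ_{n=0}^∞ ((−1)^n τ^{ϑn}/(n+2)!) B^{n+2}(0,w)ᵀ), where the series converges absolutely. -/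
noncomputable section

/-- Points of `ℝ × ℝ^{2d}`, written `z = (t, ξ)` with `ξ = (x, v)` indexed by
`Fin d ⊕ Fin d` (`Sum.inl` for `x`, `Sum.inr` for `v`). -/
abbrev Ptb (d : ℕ) := ℝ × ((Fin d ⊕ Fin d) → ℝ)

variable {d : ℕ}

/-- Flow of `Z_h`: `e^{τ Z_h}(t, x, v) = (t, x, v + τ h)`. -/
def flowZB (h : Fin d → ℝ) (τ : ℝ) (z : Ptb d) : Ptb d :=
  (z.1, z.2 + τ • Sum.elim (0 : Fin d → ℝ) h)

/-- Flow of the non-homogeneous drift `Y`: `e^{τY}(t, ξ) = (t + τ, exp(τB) ξ)`. -/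
def flowYB (B : Matrix (Fin d ⊕ Fin d) (Fin d ⊕ Fin d) ℝ) (τ : ℝ) (z : Ptb d) : Ptb d :=
  (z.1 + τ, (NormedSpace.exp (τ • B)).mulVec z.2)

/-!
Conjugating the flow of `Z_w` by the flow of `Y` gives
`z₅ = (t, ξ + τ (1 - e^{-τ^ϑ B}) (0, w))`, because `e^{-τ^ϑ B} e^{τ^ϑ B} = 1`.
Expanding `e^{-sB} = 1 - sB + s² Σₙ (-s)ⁿ Bⁿ⁺² / (n+2)!` with `s = τ^ϑ`, the first-order term
`τ^{ϑ+1} B (0, w) = τ^{ϑ+1} (B₁₂ w, B₂₂ w)` has its `v`-component removed by the last flow,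
and the second-order remainder is the series.
-/

open NormedSpace Nat
open scoped Matrix

section BanachAlgebra

variable {𝔸 : Type*} [NormedRing 𝔸] [NormedAlgebra ℝ 𝔸] [CompleteSpace 𝔸]

theorem summable_pow_div_factorial_add_two_smul (t : ℝ) (x : 𝔸) :
    Summable fun n : ℕ => (t ^ n / (n + 2)!) • x ^ (n + 2) := by
  refine .of_norm_bounded
    ((Real.summable_pow_div_factorial (|t| * ‖x‖)).mul_left (‖x‖ ^ 2)) fun n => ?_
  have hfact : (n ! : ℝ) ≤ (n + 2)! := by exact_mod_cast factorial_le (by omega)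
  calc ‖(t ^ n / (n + 2)!) • x ^ (n + 2)‖
      ≤ |t| ^ n / (n + 2)! * ‖x‖ ^ (n + 2) := by
        rw [norm_smul, Real.norm_eq_abs, abs_div, abs_pow, Nat.abs_cast]
        gcongr
        exact norm_pow_le' x (by omega)
    _ ≤ |t| ^ n / n ! * ‖x‖ ^ (n + 2) := by gcongr
    _ = ‖x‖ ^ 2 * ((|t| * ‖x‖) ^ n / n !) := by ring

theorem exp_smul_eq_one_add_add_tsum (t : ℝ) (x : 𝔸) :
    exp (t • x) = 1 + t • x + t ^ 2 • ∑' n : ℕ, (t ^ n / (n + 2)!) • x ^ (n + 2) := by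
  have hexp := expSeries_summable' (𝕂 := ℝ) (t • x)
  rw [← (exp_series_hasSum_exp' (𝕂 := ℝ) (t • x)).tsum_eq, hexp.tsum_eq_zero_add,
    ((summable_nat_add_iff 1).mpr hexp).tsum_eq_zero_add, ← add_assoc,
    ← (summable_pow_div_factorial_add_two_smul t x).tsum_const_smul]
  congr 1
  · simp
  · refine tsum_congr fun n => ?_
    rw [smul_pow, smul_smul, smul_smul]
    congr 1
    field_simp
    ring

end BanachAlgebra

theorem HasSum.matrix_mulVec {ι m n R : Type*} [NonUnitalNonAssocSemiring R] [TopologicalSpace R]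
    [IsTopologicalSemiring R] [Fintype n] {f : ι → Matrix m n R} {A : Matrix m n R}
    (hf : HasSum f A) (u : n → R) : HasSum (fun i => f i *ᵥ u) (A *ᵥ u) :=
  hf.map (Matrix.mulVec.addMonoidHomLeft u) (continuous_id.matrix_mulVec continuous_const)

namespace Matrix

variable {m n o p R : Type*}

theorem mulVec_sumElim_zero [NonUnitalNonAssocSemiring R] [Fintype o] [Fintype p]
    (B : Matrix (m ⊕ n) (o ⊕ p) R) (w : p → R) :
    B *ᵥ Sum.elim 0 w = Sum.elim (B.toBlocks₁₂ *ᵥ w) (B.toBlocks₂₂ *ᵥ w) := by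
  conv_lhs => rw [← fromBlocks_toBlocks B]
  rw [fromBlocks_mulVec]
  simp [Function.comp_def, ← Pi.zero_def]

variable [Fintype m] [DecidableEq m]

attribute [local instance] Matrix.linftyOpNormedAddCommGroup Matrix.linftyOpNormedRing
  Matrix.linftyOpNormedAlgebra

theorem summable_pow_div_factorial_add_two_smul_mulVec (B : Matrix m m ℝ) (t : ℝ) (u : m → ℝ) :
    Summable fun n : ℕ => (t ^ n / (n + 2)!) • (B ^ (n + 2)) *ᵥ u := by
  simpa only [smul_mulVec] using
    ((summable_pow_div_factorial_add_two_smul t B).hasSum.matrix_mulVec u).summable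

theorem exp_smul_mulVec (B : Matrix m m ℝ) (t : ℝ) (u : m → ℝ) :
    exp (t • B) *ᵥ u =
      u + t • B *ᵥ u + t ^ 2 • ∑' n : ℕ, (t ^ n / (n + 2)!) • (B ^ (n + 2)) *ᵥ u := by
  -- not `rw`: the goal carries the plain matrix instances, not the local normed ones
  refine (congrArg (· *ᵥ u) (exp_smul_eq_one_add_add_tsum t B)).trans ?_
  rw [add_mulVec, add_mulVec, one_mulVec, smul_mulVec, smul_mulVec,
    ((summable_pow_div_factorial_add_two_smul t B).hasSum.matrix_mulVec u).tsum_eq.symm]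
  simp only [smul_mulVec]

theorem exp_neg_smul_mul_exp_smul (B : Matrix m m ℝ) (t : ℝ) :
    exp ((-t) • B) * exp (t • B) = 1 := by
  rw [← exp_add_of_commute _ _ ((Commute.refl B).smul_left _ |>.smul_right _), neg_smul,
    neg_add_cancel, exp_zero]

end Matrix

theorem flowYB_neg_flowZB_flowYB (B : Matrix (Fin d ⊕ Fin d) (Fin d ⊕ Fin d) ℝ) (s c : ℝ)
    (w : Fin d → ℝ) (z : Ptb d) :
    flowYB B (-s) (flowZB w c (flowYB B s z)) =
      (z.1, z.2 + c • exp ((-s) • B) *ᵥ Sum.elim 0 w) := by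
  simp only [flowYB, flowZB, Matrix.mulVec_add, Matrix.mulVec_mulVec,
    Matrix.exp_neg_smul_mul_exp_smul, Matrix.one_mulVec, Matrix.mulVec_smul]
  congr 1
  ring

theorem nonhomogeneous_flow_composition_general (d : ℕ)
    (B : Matrix (Fin d ⊕ Fin d) (Fin d ⊕ Fin d) ℝ)
    (ϑ : ℝ) (hϑ : 0 < ϑ) (τ : ℝ) (hτ : 0 ≤ τ) (w : Fin d → ℝ) (z : Ptb d) :
    Summable (fun n : ℕ =>
      ‖(((-1 : ℝ) ^ n * τ ^ (ϑ * n) / ((n + 2).factorial : ℝ)) •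
        (B ^ (n + 2)).mulVec (Sum.elim (0 : Fin d → ℝ) w))‖) ∧
    flowZB (B.toBlocks₂₂.mulVec w) (-(τ ^ (ϑ + 1)))
        (flowYB B (-(τ ^ ϑ)) (flowZB w (-τ) (flowYB B (τ ^ ϑ) (flowZB w τ z)))) =
      (z.1, z.2 + (τ ^ (ϑ + 1)) • Sum.elim (B.toBlocks₁₂.mulVec w) (0 : Fin d → ℝ)
        - (τ ^ (2 * ϑ + 1)) •
            ∑' n : ℕ, ((-1 : ℝ) ^ n * τ ^ (ϑ * n) / ((n + 2).factorial : ℝ)) •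
              (B ^ (n + 2)).mulVec (Sum.elim (0 : Fin d → ℝ) w)) := by
  set s := τ ^ ϑ
  have hcoef (n : ℕ) : (-1 : ℝ) ^ n * τ ^ (ϑ * n) = (-s) ^ n := by
    rw [Real.rpow_mul_natCast hτ, ← mul_pow, neg_one_mul]
  have hs₁ : τ ^ (ϑ + 1) = s * τ := Real.rpow_add_one' hτ (by positivity)
  have hs₂ : τ ^ (2 * ϑ + 1) = s ^ 2 * τ := by
    rw [Real.rpow_add_one' hτ (by positivity), two_mul, Real.rpow_add' hτ (by positivity), sq]
  simp only [hcoef, hs₁, hs₂]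
  refine ⟨summable_norm_iff.mpr (B.summable_pow_div_factorial_add_two_smul_mulVec (-s) _), ?_⟩
  rw [flowYB_neg_flowZB_flowYB, Matrix.exp_smul_mulVec, Matrix.mulVec_sumElim_zero]
  simp only [flowZB]
  congr 1
  have hsplit : Sum.elim (B.toBlocks₁₂ *ᵥ w) (B.toBlocks₂₂ *ᵥ w) =
      Sum.elim (B.toBlocks₁₂ *ᵥ w) 0 + Sum.elim (0 : Fin d → ℝ) (B.toBlocks₂₂ *ᵥ w) := by
    rw [← Sum.elim_add_add, add_zero, zero_add]
  rw [hsplit]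
  module

/-- Non-homogeneous flow composition identity: with
`z₂ = e^{τ Z_w}(z)`, `z₃ = e^{τ^ϑ Y}(z₂)`, `z₄ = e^{−τ Z_w}(z₃)`, `z₅ = e^{−τ^ϑ Y}(z₄)`,
`z₆ = e^{−τ^{ϑ+1} Z_{B₂₂ w}}(z₅)`, one has
`z₆ = (t, ξ + τ^{ϑ+1}(B₁₂ w, 0)) − τ^{2ϑ+1} (0, Σ_{n≥0} ((−1)^n τ^{ϑn}/(n+2)!) B^{n+2}(0,w))`,
the series converging absolutely. -/
theorem nonhomogeneous_flow_composition (d : ℕ) (hd : 1 ≤ d)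
    (B : Matrix (Fin d ⊕ Fin d) (Fin d ⊕ Fin d) ℝ)
    (ϑ : ℝ) (hϑ : 0 < ϑ) (τ : ℝ) (hτ : 0 ≤ τ) (w : Fin d → ℝ) (z : Ptb d) :
    Summable (fun n : ℕ =>
      ‖(((-1 : ℝ) ^ n * τ ^ (ϑ * n) / ((n + 2).factorial : ℝ)) •
        (B ^ (n + 2)).mulVec (Sum.elim (0 : Fin d → ℝ) w))‖) ∧
    flowZB (B.toBlocks₂₂.mulVec w) (-(τ ^ (ϑ + 1)))
        (flowYB B (-(τ ^ ϑ)) (flowZB w (-τ) (flowYB B (τ ^ ϑ) (flowZB w τ z)))) =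
      (z.1, z.2 + (τ ^ (ϑ + 1)) • Sum.elim (B.toBlocks₁₂.mulVec w) (0 : Fin d → ℝ)
        - (τ ^ (2 * ϑ + 1)) •
            ∑' n : ℕ, ((-1 : ℝ) ^ n * τ ^ (ϑ * n) / ((n + 2).factorial : ℝ)) •
              (B ^ (n + 2)).mulVec (Sum.elim (0 : Fin d → ℝ) w)) :=
  nonhomogeneous_flow_composition_general d B ϑ hϑ τ hτ w z
end
end
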